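/- arXiv:1508.04050 — 4 statements merged into one kernel-verified Lean document; each statement's English description precedes it below -/
import Mathlib

section
/- Let n ∈ ℕ, k : Fin n → ℕ, σ ∈ Σ_n, and h_i ∈ Σ_{k i} for each i. Then in Σ_{∑ i, k i} one has δ_{n;k}(σ) · β_k(h_1, …, h_n) = β_{k∘σ⁻¹}(h_{σ⁻¹(1)}, …, h_{σ⁻¹(n)}) · δ_{n;k}(σ), where the right-hand block sum is regarded as an element of Σ_{∑ i, k i} via the equality ∑ i, k(σ⁻¹ i) = ∑ i, k i. -/
/-- Splitting a sigma type over `Fin (n+1)` as first block plus the rest. -/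
def sigmaFinSuccEquiv (n : ℕ) (β : Fin (n + 1) → Type*) :
    ((i : Fin (n + 1)) × β i) ≃ β 0 ⊕ ((i : Fin n) × β i.succ) where
  toFun x := Fin.cases (motive := fun i => β i → β 0 ⊕ ((i : Fin n) × β i.succ))
    (fun b => Sum.inl b) (fun i b => Sum.inr ⟨i, b⟩) x.1 x.2
  invFun x := Sum.elim (fun b => ⟨0, b⟩) (fun p => ⟨p.1.succ, p.2⟩) x
  left_inv := by
    rintro ⟨i, b⟩
    induction i using Fin.cases <;> simp
  right_inv := by rintro (b | ⟨i, b⟩) <;> simp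

/-- The canonical order-preserving equivalence `(Σ i : Fin n, Fin (k i)) ≃ Fin (∑ i, k i)`,
putting the blocks in order. -/
def blockFinSigmaFinEquiv : ∀ {n : ℕ} {k : Fin n → ℕ}, ((i : Fin n) × Fin (k i)) ≃ Fin (∑ i, k i)
  | 0, k => (Equiv.equivOfIsEmpty _ (Fin 0)).trans (finCongr (Fin.sum_univ_zero k).symm)
  | n + 1, k =>
      ((sigmaFinSuccEquiv n fun i => Fin (k i)).trans
        ((Equiv.refl (Fin (k 0))).sumCongr (blockFinSigmaFinEquiv (k := fun i => k i.succ)))).trans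
        (finSumFinEquiv.trans (finCongr (Fin.sum_univ_succ k).symm))

/-- The block sum `β_k(h₁, …, h_n)` of permutations `h i : Σ_{k i}`:
on the sigma type it is `(i, j) ↦ (i, h i j)`. -/
def blockSum {n : ℕ} {k : Fin n → ℕ} (h : (i : Fin n) → Equiv.Perm (Fin (k i))) :
    Equiv.Perm (Fin (∑ i, k i)) :=
  blockFinSigmaFinEquiv.symm.trans ((Equiv.sigmaCongrRight h).trans blockFinSigmaFinEquiv)

/-- The block permutation `δ_{n;k}(σ)`: on the sigma type it is `(i, j) ↦ (σ i, j)`,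
regarded as a permutation of `Fin (∑ i, k i)` via `∑ i, k (σ⁻¹ i) = ∑ i, k i`. -/
def blockPerm {n : ℕ} (k : Fin n → ℕ) (σ : Equiv.Perm (Fin n)) :
    Equiv.Perm (Fin (∑ i, k i)) :=
  blockFinSigmaFinEquiv.symm.trans
    ((Equiv.sigmaCongrLeft' (β := fun i => Fin (k i)) σ).trans
      (blockFinSigmaFinEquiv.trans (finCongr (Equiv.sum_comp σ.symm k))))

/-- Transport of permutations along an equality of cardinalities. -/
def permCast {a b : ℕ} (h : a = b) : Equiv.Perm (Fin a) ≃ Equiv.Perm (Fin b) :=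
  (finCongr h).permCongr

/-- Flattening a doubly indexed family of sizes. -/
def flatten {n : ℕ} {k : Fin n → ℕ} (m : (i : Fin n) → Fin (k i) → ℕ) :
    Fin (∑ i, k i) → ℕ :=
  fun y => m (blockFinSigmaFinEquiv.symm y).1 (blockFinSigmaFinEquiv.symm y).2

/-- The canonical identification of the double sum with the sum of the flattened family. -/
theorem sum_flatten {n : ℕ} {k : Fin n → ℕ} (m : (i : Fin n) → Fin (k i) → ℕ) :
    ∑ i, ∑ j, m i j = ∑ y, flatten m y := by
  rw [← Equiv.sum_comp (blockFinSigmaFinEquiv (k := k)) (flatten m),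
    ← Finset.univ_sigma_univ, Finset.sum_sigma]
  exact Finset.sum_congr rfl fun a _ => Finset.sum_congr rfl fun s _ => by
    simp only [flatten]
    conv_rhs => rw [Equiv.symm_apply_apply]

theorem Equiv.sigmaCongrRight_trans_sigmaCongrLeft' {α₁ α₂ : Type*} {β γ : α₁ → Type*}
    (e : α₁ ≃ α₂) (f : ∀ a, β a ≃ γ a) :
    (Equiv.sigmaCongrRight f).trans (Equiv.sigmaCongrLeft' e) =
      (Equiv.sigmaCongrLeft' e).trans (Equiv.sigmaCongrRight fun a => f (e.symm a)) :=
  Equiv.symm_bijective.injective <| Equiv.ext fun _ => rfl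

theorem delta_mul_beta_eq_beta_permuted_mul_delta {n : ℕ} (k : Fin n → ℕ)
    (σ : Equiv.Perm (Fin n)) (h : (i : Fin n) → Equiv.Perm (Fin (k i))) :
    blockPerm k σ * blockSum h =
      permCast (Equiv.sum_comp σ.symm k) (blockSum fun i => h (σ.symm i)) * blockPerm k σ := by
  ext x
  have hcomm := Equiv.ext_iff.1 (Equiv.sigmaCongrRight_trans_sigmaCongrLeft' σ h)
    (blockFinSigmaFinEquiv.symm x)
  simp only [Equiv.trans_apply] at hcomm
  simp only [Equiv.Perm.mul_apply, blockSum, blockPerm, permCast, Equiv.permCongr_apply,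
    Equiv.trans_apply, Equiv.symm_apply_apply, finCongr_symm, finCongr_apply, Fin.cast_cast, hcomm]
  simp
end

section
/- Let n ∈ ℕ, k : Fin n → ℕ, m : (i : Fin n) → Fin (k i) → ℕ, and h_{ij} ∈ Σ_{m_i(j)}. Then β_{(∑_j m_1(j), …, ∑_j m_n(j))}(β_{m_1}(h_{1,1}, …, h_{1,k_1}), …, β_{m_n}(h_{n,1}, …, h_{n,k_n})) = β_{m♭}(h♭), where m♭ and h♭ denote the flattened family of sizes and of permutations, and both sides are regarded as permutations of the same finite set via the canonical identification of ∑_i ∑_j m_i(j) with the sum of the flattened family. -/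
/-!
Both sides are conjugates of the same permutation `(i, j, t) ↦ (i, j, h i j t)` of
`Σ i j, Fin (m i j)` by two enumerations of that type: the nested one (positions inside block
`i`, then blocks) and the flat one (through the flattened index `blockFinSigmaFinEquiv ⟨i, j⟩`).
Since `blockFinSigmaFinEquiv` enumerates a sigma type lexicographically, both send `(i, j, t)`
to `∑_{i' < i} ∑_j m i' j + ∑_{j' < j} m i j' + t`, so the two enumerations coincide.
-/
open Finset

theorem Fin.sum_Iio_succ {M : Type*} [AddCommMonoid M] {n : ℕ} (f : Fin (n + 1) → M)
    (i : Fin n) : ∑ x ∈ Iio i.succ, f x = f 0 + ∑ x ∈ Iio i, f x.succ := by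
  rw [← Finset.Ico_bot, _root_.bot_eq_zero, Ico_eq_cons_Ioo i.succ_pos, Finset.sum_cons,
    ← Fin.map_succEmb_Iio, sum_map]
  rfl

theorem sum_Iio_add_le_sum_Iio {α M : Type*} [PartialOrder α] [LocallyFiniteOrderBot α]
    [AddCommMonoid M] [PartialOrder M] [CanonicallyOrderedAdd M] (f : α → M) {a i : α}
    (h : a < i) : ∑ x ∈ Iio a, f x + f a ≤ ∑ x ∈ Iio i, f x := by
  rw [add_comm, ← sum_cons notMem_Iio_self]
  exact sum_le_sum_of_subset fun x hx => by
    simp only [mem_cons, mem_Iio] at hx ⊢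
    rcases hx with rfl | hx
    exacts [h, hx.trans h]

theorem Equiv.permCongr_eq_of_semiconj {α β : Type*} (e : α ≃ β) {p : Perm α} {q : Perm β}
    (h : Function.Semiconj e p q) : e.permCongr p = q :=
  Equiv.ext fun b => by simpa using h (e.symm b)

theorem Equiv.permCongr_sigmaCongrLeft'_sigmaCongrRight {α₁ α₂ : Type*} {β : α₁ → Type*}
    (f : α₁ ≃ α₂) (F : ∀ a, Perm (β a)) :
    (sigmaCongrLeft' f).permCongr (Perm.sigmaCongrRight F) =
      Perm.sigmaCongrRight fun b => F (f.symm b) := by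
  rw [sigmaCongrLeft', ← permCongr_symm, symm_apply_eq]
  exact (permCongr_eq_of_semiconj (sigmaCongrLeft f.symm) fun _ => rfl).symm

theorem Equiv.sigmaCongrLeft'_apply_fin {α₁ α₂ : Type*} {β : α₁ → ℕ} (f : α₁ ≃ α₂)
    (a : α₁) (x : Fin (β a)) :
    sigmaCongrLeft' (β := fun a => Fin (β a)) f ⟨a, x⟩ =
      ⟨f a, Fin.cast (by rw [f.symm_apply_apply]) x⟩ := by
  refine Sigma.ext rfl ?_
  simp only [sigmaCongrLeft', sigmaCongrLeft, coe_fn_symm_mk]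
  rw [Fin.heq_ext_iff (by simp), Fin.val_cast]
  exact (Fin.heq_ext_iff (by simp)).1 (eqRec_heq_self _ _)

theorem blockFinSigmaFinEquiv_val : ∀ {n : ℕ} {k : Fin n → ℕ} (i : Fin n) (j : Fin (k i)),
    (blockFinSigmaFinEquiv ⟨i, j⟩ : ℕ) = ∑ a ∈ Iio i, k a + j
  | 0, _, i, _ => i.elim0
  | n + 1, k, i, j => by
    induction i using Fin.cases with
    | zero => simp [blockFinSigmaFinEquiv, sigmaFinSuccEquiv]
    | succ i =>
      simp [blockFinSigmaFinEquiv, sigmaFinSuccEquiv,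
        blockFinSigmaFinEquiv_val (k := fun i => k i.succ) i j, Fin.sum_Iio_succ, add_assoc]

theorem blockFinSigmaFinEquiv_lt_iff {n : ℕ} {k : Fin n → ℕ} {a i : Fin n} (b : Fin (k a))
    (j : Fin (k i)) :
    blockFinSigmaFinEquiv ⟨a, b⟩ < blockFinSigmaFinEquiv ⟨i, j⟩ ↔
      a < i ∨ a = i ∧ (b : ℕ) < j := by
  rw [Fin.lt_def, blockFinSigmaFinEquiv_val, blockFinSigmaFinEquiv_val]
  rcases lt_trichotomy a i with h | rfl | h
  · have := sum_Iio_add_le_sum_Iio k h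
    simp only [h, true_or, iff_true]
    omega
  · simp
  · have := sum_Iio_add_le_sum_Iio k h
    simp only [h.not_gt, h.ne', false_and, or_self, iff_false]
    omega

theorem sum_Iio_blockFinSigmaFinEquiv {M : Type*} [AddCommMonoid M] {n : ℕ} {k : Fin n → ℕ}
    (f : ((i : Fin n) × Fin (k i)) → M) (i : Fin n) (j : Fin (k i)) :
    ∑ y ∈ Iio (blockFinSigmaFinEquiv ⟨i, j⟩), f (blockFinSigmaFinEquiv.symm y) =
      ∑ a ∈ Iio i, ∑ b, f ⟨a, b⟩ + ∑ b ∈ Iio j, f ⟨i, b⟩ := by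
  have block (a : Fin n) :
      (∑ b, if blockFinSigmaFinEquiv ⟨a, b⟩ < blockFinSigmaFinEquiv ⟨i, j⟩ then f ⟨a, b⟩ else 0) =
        (if a < i then ∑ b, f ⟨a, b⟩ else 0) + if a = i then ∑ b ∈ Iio j, f ⟨i, b⟩ else 0 := by
    simp only [blockFinSigmaFinEquiv_lt_iff]
    rcases lt_trichotomy a i with h | rfl | h
    · simp [h, h.ne]
    · simp [← sum_filter, filter_gt_eq_Iio]
    · simp [h.not_gt, h.ne']
  rw [← filter_gt_eq_Iio, sum_filter, ← Equiv.sum_comp blockFinSigmaFinEquiv, Fintype.sum_sigma]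
  simp only [Equiv.symm_apply_apply, block, sum_add_distrib, sum_ite_eq', mem_univ, if_true,
    ← sum_filter, filter_gt_eq_Iio]

def nestedBlockEquiv {n : ℕ} {k : Fin n → ℕ} (m : (i : Fin n) → Fin (k i) → ℕ) :
    ((i : Fin n) × (j : Fin (k i)) × Fin (m i j)) ≃ Fin (∑ i, ∑ j, m i j) :=
  (Equiv.sigmaCongrRight fun _ => blockFinSigmaFinEquiv).trans blockFinSigmaFinEquiv

def flatBlockEquiv {n : ℕ} {k : Fin n → ℕ} (m : (i : Fin n) → Fin (k i) → ℕ) :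
    ((i : Fin n) × (j : Fin (k i)) × Fin (m i j)) ≃ Fin (∑ y, flatten m y) :=
  (Equiv.sigmaAssoc _).symm.trans
    ((Equiv.sigmaCongrLeft' blockFinSigmaFinEquiv).trans blockFinSigmaFinEquiv)

theorem nestedBlockEquiv_trans_finCongr {n : ℕ} {k : Fin n → ℕ}
    (m : (i : Fin n) → Fin (k i) → ℕ) :
    (nestedBlockEquiv m).trans (finCongr (sum_flatten m)) = flatBlockEquiv m := by
  ext ⟨i, j, t⟩
  change (blockFinSigmaFinEquiv (k := fun i => ∑ j, m i j) ⟨i, blockFinSigmaFinEquiv ⟨j, t⟩⟩ : ℕ) =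
    (blockFinSigmaFinEquiv (Equiv.sigmaCongrLeft' (β := fun p => Fin (m p.1 p.2))
      blockFinSigmaFinEquiv ⟨⟨i, j⟩, t⟩) : ℕ)
  rw [Equiv.sigmaCongrLeft'_apply_fin, blockFinSigmaFinEquiv_val, blockFinSigmaFinEquiv_val,
    blockFinSigmaFinEquiv_val, Fin.val_cast, sum_Iio_blockFinSigmaFinEquiv (fun p => m p.1 p.2)]
  ring

theorem blockSum_blockSum_eq_permCongr {n : ℕ} {k : Fin n → ℕ}
    {m : (i : Fin n) → Fin (k i) → ℕ}
    (h : (i : Fin n) → (j : Fin (k i)) → Equiv.Perm (Fin (m i j))) :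
    blockSum (fun i => blockSum (h i)) = (nestedBlockEquiv m).permCongr
      (Equiv.Perm.sigmaCongrRight fun i => Equiv.Perm.sigmaCongrRight (h i)) :=
  rfl

theorem blockSum_flatten_eq_permCongr {n : ℕ} {k : Fin n → ℕ}
    {m : (i : Fin n) → Fin (k i) → ℕ}
    (h : (i : Fin n) → (j : Fin (k i)) → Equiv.Perm (Fin (m i j))) :
    blockSum (fun y => h (blockFinSigmaFinEquiv.symm y).1 (blockFinSigmaFinEquiv.symm y).2 :
        (y : Fin (∑ i, k i)) → Equiv.Perm (Fin (flatten m y))) =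
      (flatBlockEquiv m).permCongr
        (Equiv.Perm.sigmaCongrRight fun i => Equiv.Perm.sigmaCongrRight (h i)) :=
  congrArg blockFinSigmaFinEquiv.permCongr
    (Equiv.permCongr_sigmaCongrLeft'_sigmaCongrRight blockFinSigmaFinEquiv
      fun p : (i : Fin n) × Fin (k i) => h p.1 p.2).symm

theorem blockSum_blockSum {n : ℕ} (k : Fin n → ℕ)
    (m : (i : Fin n) → Fin (k i) → ℕ)
    (h : (i : Fin n) → (j : Fin (k i)) → Equiv.Perm (Fin (m i j))) :
    permCast (sum_flatten m) (blockSum fun i => blockSum (h i)) =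
      blockSum (fun y => h (blockFinSigmaFinEquiv.symm y).1 (blockFinSigmaFinEquiv.symm y).2 :
        (y : Fin (∑ i, k i)) → Equiv.Perm (Fin (flatten m y))) := by
  rw [blockSum_blockSum_eq_permCongr, blockSum_flatten_eq_permCongr,
    ← nestedBlockEquiv_trans_finCongr]
  rfl
end

section
/- Let n ≥ 1, j_1, …, j_n ≥ 1 with N = ∑_i j_i ≥ 2. Let J_i = j_1 + ⋯ + j_i and R_i = j_n + j_{n−1} + ⋯ + j_{n−i+1} (partial sums of the reversed sequence). Then in J_N: (s_{1,N} · ∏_{i=1}^{n} s_{R_{i−1}+1, R_i}) · (s_{1,N} · ∏_{i=1}^{n} s_{J_{i−1}+1, J_i}) = e, where s_{p,p} denotes the identity element (the factors within each product pairwise commute, so the order of each product is immaterial). -/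
/-- Generators `s_{p,q}`, `1 ≤ p < q ≤ n`, of the `n`-fruit cactus group. -/
def CactusGen (n : ℕ) : Type :=
  { pq : ℕ × ℕ // 1 ≤ pq.1 ∧ pq.1 < pq.2 ∧ pq.2 ≤ n }

/-- The defining relations of the `n`-fruit cactus group, as elements of the free group:
(i) `s_{p,q}² = e`; (ii) `s_{p,q}s_{k,l} = s_{k,l}s_{p,q}` for disjoint intervals;
(iii) `s_{p,q}s_{k,l} = s_{p+q-l,p+q-k}s_{p,q}` for `p ≤ k < l ≤ q`. -/
def cactusRels (n : ℕ) : Set (FreeGroup (CactusGen n)) :=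
  { x |
    (∃ (p q : ℕ) (h : 1 ≤ p ∧ p < q ∧ q ≤ n),
      x = FreeGroup.of (⟨(p, q), h⟩ : CactusGen n) * FreeGroup.of ⟨(p, q), h⟩) ∨
    (∃ (p q k l : ℕ) (h : 1 ≤ p ∧ p < q ∧ q ≤ n) (h' : 1 ≤ k ∧ k < l ∧ l ≤ n),
      (q < k ∨ l < p) ∧
      x = FreeGroup.of (⟨(p, q), h⟩ : CactusGen n) * FreeGroup.of ⟨(k, l), h'⟩ *
        (FreeGroup.of (⟨(k, l), h'⟩ : CactusGen n) * FreeGroup.of ⟨(p, q), h⟩)⁻¹) ∨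
    (∃ (p q k l : ℕ) (h : 1 ≤ p ∧ p < q ∧ q ≤ n) (h' : 1 ≤ k ∧ k < l ∧ l ≤ n)
        (h'' : 1 ≤ p + q - l ∧ p + q - l < p + q - k ∧ p + q - k ≤ n),
      (p ≤ k ∧ l ≤ q) ∧
      x = FreeGroup.of (⟨(p, q), h⟩ : CactusGen n) * FreeGroup.of ⟨(k, l), h'⟩ *
        (FreeGroup.of (⟨(p + q - l, p + q - k), h''⟩ : CactusGen n) *
          FreeGroup.of ⟨(p, q), h⟩)⁻¹) }

/-- The `n`-fruit cactus group `J_n`, as a presented group. -/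
def CactusGroup (n : ℕ) : Type :=
  PresentedGroup (cactusRels n)

instance (n : ℕ) : Group (CactusGroup n) :=
  inferInstanceAs (Group (PresentedGroup (cactusRels n)))

/-- The generator `s_{p,q}` of the cactus group `J_n`. -/
def s {n : ℕ} (p q : ℕ) (h : 1 ≤ p ∧ p < q ∧ q ≤ n) : CactusGroup n :=
  PresentedGroup.of ⟨(p, q), h⟩

/-- The generator `s_{p,q}` of `J_n` extended by the convention that `s_{p,p}` denotes the
identity element. -/
def sE {n : ℕ} (p q : ℕ) (h : 1 ≤ p ∧ p ≤ q ∧ q ≤ n) : CactusGroup n :=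
  if hlt : p < q then s p q ⟨h.1, hlt, h.2.2⟩ else 1

/-- Transport of cactus group elements along an equality. -/
def Jcast {a b : ℕ} (h : a = b) (x : CactusGroup a) : CactusGroup b := h ▸ x

/-- `partialSum k i = ∑_{j < i} k j`. -/
def partialSum {n : ℕ} (k : Fin n → ℕ) (i : Fin n) : ℕ :=
  ∑ j ∈ Finset.Iio i, k j

theorem partialSum_add_le {n : ℕ} (k : Fin n → ℕ) (i : Fin n) :
    partialSum k i + k i ≤ ∑ j, k j := by
  have h1 : partialSum k i + k i = ∑ j ∈ Finset.Iic i, k j := by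
    rw [partialSum, add_comm, ← Finset.sum_insert (by simp), Finset.Iio_insert]
  rw [h1]
  exact Finset.sum_le_sum_of_subset (Finset.subset_univ _)

/-!
Write `w = s_{1,N}`, and let `A` and `B` be the products of the blocks `s_{R_{i-1}+1,R_i}` and
`s_{J_{i-1}+1,J_i}`. Conjugation by the involution `w` reflects every interval of `[1, N]`, and
the reflection of the `i`-th block of the reversed composition is the `(n + 1 - i)`-th block of
the original one. Hence `w A w` is the product of the involutions of `B` taken in the opposite
order, i.e. `B⁻¹`, and `(w A)(w B) = (w A w) B = 1`.
-/

theorem List.prod_reverse_mul_prod_eq_one {M : Type*} [Monoid M] {l : List M}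
    (hl : ∀ x ∈ l, x * x = 1) : l.reverse.prod * l.prod = 1 := by
  induction l with
  | nil => simp
  | cons a t ih =>
    rw [List.forall_mem_cons] at hl
    calc (a :: t).reverse.prod * (a :: t).prod = t.reverse.prod * (a * a) * t.prod := by
          simp only [List.reverse_cons, List.prod_append, List.prod_cons, List.prod_nil, mul_one,
            mul_assoc]
      _ = 1 := by rw [hl.1, mul_one, ih hl.2]

theorem mul_list_prod_mul_eq_one {G : Type*} [Group G] {w : G} (hw : w * w = 1)
    {l₁ l₂ : List G} (hl : l₁.map (fun x => w * x * w) = l₂.reverse)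
    (h₂ : ∀ x ∈ l₂, x * x = 1) : w * l₁.prod * (w * l₂.prod) = 1 := by
  have hconj : ⇑(MulAut.conj w) = fun x => w * x * w :=
    funext fun x => by rw [MulAut.conj_apply, inv_eq_of_mul_eq_one_right hw]
  calc w * l₁.prod * (w * l₂.prod) = MulAut.conj w l₁.prod * l₂.prod := by
        simp only [hconj, mul_assoc]
    _ = 1 := by rw [map_list_prod, hconj, hl, List.prod_reverse_mul_prod_eq_one h₂]

namespace CactusGroup

variable {m : ℕ}

theorem s_mul_self {p q : ℕ} (h : 1 ≤ p ∧ p < q ∧ q ≤ m) :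
    (s p q h : CactusGroup m) * s p q h = 1 :=
  PresentedGroup.one_of_mem (Or.inl ⟨p, q, h, rfl⟩)

theorem s_mul_s_of_le {p q k l : ℕ} (h : 1 ≤ p ∧ p < q ∧ q ≤ m) (h' : 1 ≤ k ∧ k < l ∧ l ≤ m)
    (h'' : 1 ≤ p + q - l ∧ p + q - l < p + q - k ∧ p + q - k ≤ m) (hpk : p ≤ k) (hlq : l ≤ q) :
    (s p q h : CactusGroup m) * s k l h' = s (p + q - l) (p + q - k) h'' * s p q h :=
  mul_inv_eq_one.mp <| PresentedGroup.one_of_mem <|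
    Or.inr <| Or.inr ⟨p, q, k, l, h, h', h'', ⟨hpk, hlq⟩, rfl⟩

theorem sE_of_lt {p q : ℕ} (hpq : p < q) (h : 1 ≤ p ∧ p ≤ q ∧ q ≤ m) :
    (sE p q h : CactusGroup m) = s p q ⟨h.1, hpq, h.2.2⟩ :=
  dif_pos hpq

theorem sE_mul_self {p q : ℕ} (h : 1 ≤ p ∧ p ≤ q ∧ q ≤ m) :
    (sE p q h : CactusGroup m) * sE p q h = 1 := by
  unfold sE
  split_ifs
  · exact s_mul_self _
  · exact mul_one 1

theorem s_mul_sE_mul_s {p q k l k' l' : ℕ} (h : 1 ≤ p ∧ p < q ∧ q ≤ m)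
    (h' : 1 ≤ k ∧ k ≤ l ∧ l ≤ m) (h'' : 1 ≤ k' ∧ k' ≤ l' ∧ l' ≤ m) (hpk : p ≤ k) (hlq : l ≤ q)
    (hk' : k' + l = p + q) (hl' : l' + k = p + q) :
    (s p q h : CactusGroup m) * sE k l h' * s p q h = sE k' l' h'' := by
  obtain ⟨rfl, rfl⟩ : k' = p + q - l ∧ l' = p + q - k := by omega
  unfold sE
  split_ifs with hkl hkl'
  · rw [s_mul_s_of_le h _ _ hpk hlq, mul_assoc, s_mul_self, mul_one]
  · omega
  · omega
  · rw [mul_one, s_mul_self]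

end CactusGroup

theorem partialSum_rev_add_add_partialSum {n : ℕ} (j : Fin n → ℕ) (i : Fin n) :
    partialSum (fun t : Fin n => j t.rev) i + j i.rev + partialSum j i.rev = ∑ t, j t := by
  have hrev : partialSum (fun t : Fin n => j t.rev) i = ∑ t ∈ Finset.Ioi i.rev, j t := by
    rw [partialSum, ← Fin.map_revPerm_Iio, Finset.sum_map]
    rfl
  have hunion : Finset.Ici i.rev ∪ Finset.Iio i.rev = Finset.univ := by
    ext t
    simp [le_or_gt]
  rw [hrev, Finset.sum_Ioi_add_eq_sum_Ici, partialSum, ← Finset.sum_union, hunion]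
  exact Finset.disjoint_left.2 fun t ht ht' =>
    (Finset.mem_Ici.1 ht).not_gt (Finset.mem_Iio.1 ht')

/-- In `J_N`, `N = ∑ j_i ≥ 2`, one has
`(s_{1,N} ∏_i s_{R_{i-1}+1, R_i}) (s_{1,N} ∏_i s_{J_{i-1}+1, J_i}) = e`, where `J_i` are the
partial sums of the `j_i` and `R_i` the partial sums of the reversed sequence.
(The factors within each product pairwise commute, so the order is immaterial; we take the
product in the natural order of the indices.) -/
theorem long_element_product_relation (n : ℕ) (j : Fin n → ℕ)
    (hj : ∀ i, 1 ≤ j i) (hN : 2 ≤ ∑ i, j i) :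
    (sE 1 (∑ i, j i) ⟨le_rfl, by omega, le_rfl⟩ *
        ((List.finRange n).map (fun i => sE (partialSum (fun t : Fin n => j t.rev) i + 1)
          (partialSum (fun t : Fin n => j t.rev) i + j i.rev)
          ⟨by omega, by have := hj i.rev; omega, by
            have h1 : partialSum (fun t : Fin n => j t.rev) i + j i.rev ≤
                ∑ t : Fin n, j t.rev := partialSum_add_le _ i
            have h2 : ∑ t : Fin n, j t.rev = ∑ t, j t :=
              Fintype.sum_equiv Fin.revPerm _ _ fun _ => rfl
            omega⟩)).prod) *
      (sE 1 (∑ i, j i) ⟨le_rfl, by omega, le_rfl⟩ *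
        ((List.finRange n).map (fun i => sE (partialSum j i + 1) (partialSum j i + j i)
          ⟨by omega, by have := hj i; omega, by
            have := partialSum_add_le j i; omega⟩)).prod) = 1 := by
  rw [CactusGroup.sE_of_lt hN]
  refine mul_list_prod_mul_eq_one (CactusGroup.s_mul_self _) ?_ ?_
  · rw [List.map_map, ← List.map_reverse, List.finRange_reverse, List.map_map]
    refine List.map_congr_left fun i _ => ?_
    have hsum := partialSum_rev_add_add_partialSum j i
    have hji := hj i.rev
    exact CactusGroup.s_mul_sE_mul_s _ _ ⟨by omega, by omega, by omega⟩
      (by omega) (by omega) (by omega) (by omega)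
  · simp only [List.forall_mem_map]
    exact fun i _ => CactusGroup.sE_mul_self _
end

section
/- For all m, n ≥ 1, in the cactus group J_{m+n} one has (s_{1,m+n} · s_{1,m} · s_{m+1,m+n}) · (s_{1,m+n} · s_{1,n} · s_{n+1,m+n}) = e, where s_{p,p} denotes the identity element. (This says that the commutor σ_{m,n} = s_{1,m+n}s_{1,m}s_{m+1,m+n} of the free coboundary category satisfies σ_{n,m}∘σ_{m,n} = id.) -/
theorem s_mul_self {n : ℕ} (p q : ℕ) (h : 1 ≤ p ∧ p < q ∧ q ≤ n) :
    (s p q h : CactusGroup n) * s p q h = 1 :=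
  PresentedGroup.one_of_mem (Or.inl ⟨p, q, h, rfl⟩)

theorem s_mul_s_of_le {n : ℕ} (p q k l : ℕ) (h : 1 ≤ p ∧ p < q ∧ q ≤ n)
    (h' : 1 ≤ k ∧ k < l ∧ l ≤ n) (h'' : 1 ≤ p + q - l ∧ p + q - l < p + q - k ∧ p + q - k ≤ n)
    (hpk : p ≤ k) (hlq : l ≤ q) :
    (s p q h : CactusGroup n) * s k l h' = s (p + q - l) (p + q - k) h'' * s p q h :=
  PresentedGroup.mk_eq_mk_of_mul_inv_mem
    (Or.inr (Or.inr ⟨p, q, k, l, h, h', h'', ⟨hpk, hlq⟩, rfl⟩))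

theorem sE_mul_self {n : ℕ} (p q : ℕ) (h : 1 ≤ p ∧ p ≤ q ∧ q ≤ n) :
    (sE p q h : CactusGroup n) * sE p q h = 1 := by
  unfold sE
  split
  · exact s_mul_self _ _ _
  · exact mul_one 1

-- The reflection `[a, b]` of `[k, l]` in `[p, q]` is given by `a + l = p + q = b + k`,
-- which avoids truncated subtraction.
theorem sE_mul_sE_of_le {n : ℕ} (p q k l a b : ℕ) (h : 1 ≤ p ∧ p ≤ q ∧ q ≤ n)
    (h' : 1 ≤ k ∧ k ≤ l ∧ l ≤ n) (hab : 1 ≤ a ∧ a ≤ b ∧ b ≤ n)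
    (ha : a + l = p + q) (hb : b + k = p + q) (hpk : p ≤ k) (hlq : l ≤ q) :
    (sE p q h : CactusGroup n) * sE k l h' = sE a b hab * sE p q h := by
  obtain rfl : a = p + q - l := by omega
  obtain rfl : b = p + q - k := by omega
  unfold sE
  by_cases hkl : k < l
  · rw [dif_pos hkl, dif_pos (by omega : p < q), dif_pos (by omega)]
    exact s_mul_s_of_le p q k l _ _ _ hpk hlq
  · obtain rfl : k = l := by omega
    rw [dif_neg hkl, dif_neg (lt_irrefl _), mul_one, one_mul]

theorem sE_mul_sE_mul_sE_of_le {n : ℕ} (p q k l a b : ℕ) (h : 1 ≤ p ∧ p ≤ q ∧ q ≤ n)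
    (h' : 1 ≤ k ∧ k ≤ l ∧ l ≤ n) (hab : 1 ≤ a ∧ a ≤ b ∧ b ≤ n)
    (ha : a + l = p + q) (hb : b + k = p + q) (hpk : p ≤ k) (hlq : l ≤ q) :
    (sE p q h : CactusGroup n) * sE k l h' * sE p q h = sE a b hab := by
  rw [sE_mul_sE_of_le p q k l a b h h' hab ha hb hpk hlq, mul_assoc, sE_mul_self, mul_one]

theorem mul_mul_mul_eq_conj_mul_conj_of_mul_self_eq_one {G : Type*} [Group G] {t : G}
    (ht : t * t = 1) (a b c d : G) :
    t * a * b * (t * c * d) = t * a * t * (t * b * t) * (c * d) := by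
  simp only [mul_assoc, ← mul_assoc t t, ht, one_mul]

-- Conjugation by the involution `s_{1,m+n}` maps `s_{1,m}` to `s_{n+1,m+n}` and `s_{m+1,m+n}`
-- to `s_{1,n}`, so the product becomes `s_{n+1,m+n} s_{1,n} s_{1,n} s_{n+1,m+n} = e`.
/-- The commutor `σ_{m,n} = s_{1,m+n} s_{1,m} s_{m+1,m+n}` of the free coboundary category
satisfies `σ_{n,m} ∘ σ_{m,n} = id`: in `J_{m+n}`,
`(s_{1,m+n} s_{1,m} s_{m+1,m+n}) (s_{1,m+n} s_{1,n} s_{n+1,m+n}) = e`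
(with the convention `s_{p,p} = e`). -/
theorem commutor_symmetry (m n : ℕ) (hm : 1 ≤ m) (hn : 1 ≤ n) :
    (sE 1 (m + n) (by omega) * sE 1 m (by omega) * sE (m + 1) (m + n) (by omega) :
        CactusGroup (m + n)) *
      (sE 1 (m + n) (by omega) * sE 1 n (by omega) * sE (n + 1) (m + n) (by omega)) = 1 := by
  rw [mul_mul_mul_eq_conj_mul_conj_of_mul_self_eq_one (sE_mul_self 1 (m + n) _),
    sE_mul_sE_mul_sE_of_le 1 (m + n) 1 m (n + 1) (m + n) _ _ (by omega) (by omega) (by omega)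
      le_rfl (by omega),
    sE_mul_sE_mul_sE_of_le 1 (m + n) (m + 1) (m + n) 1 n _ _ (by omega) (by omega) (by omega)
      (by omega) le_rfl,
    mul_assoc, ← mul_assoc (sE 1 n _), sE_mul_self, one_mul, sE_mul_self]
end
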